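/- Let G be a graph with no odd hole, and let (L0, …, Lk) be a levelling in G with k ≥ 3 such that G[Lk] is connected, every vertex of L(k−1) and L(k−2) has a dependent in the next level (a vertex of which it is the only parent), and adjacent vertices in any Li (1 ≤ i ≤ k−2) have the same set of parents. Then G[L(k−2)] is a cograph. -/

import Mathlib

open SimpleGraph

universe u

variable {V : Type u}

/-- The independence (stability) number of a graph. -/
noncomputable def indepNum (G : SimpleGraph V) : ℕ :=
  sSup {n | ∃ s : Finset V, s.card = n ∧ ∀ x ∈ s, ∀ y ∈ s, x ≠ y → ¬ G.Adj x y}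

/-- A walk is induced: any edge of `G` between vertices of the walk is an edge of the walk. -/
def IsInducedWalk (G : SimpleGraph V) {u v : V} (p : G.Walk u v) : Prop :=
  ∀ x ∈ p.support, ∀ y ∈ p.support, G.Adj x y → p.toSubgraph.Adj x y

/-- An induced path. -/
def IsInducedPath (G : SimpleGraph V) {u v : V} (p : G.Walk u v) : Prop :=
  p.IsPath ∧ IsInducedWalk G p

/-- An odd hole: an induced cycle of odd length at least 5. -/
def HasOddHole (G : SimpleGraph V) : Prop :=
  ∃ (v : V) (p : G.Walk v v), p.IsCycle ∧ IsInducedWalk G p ∧ Odd p.length ∧ 5 ≤ p.length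

/-- A cograph: no induced path on four vertices. -/
def IsCograph (G : SimpleGraph V) : Prop :=
  ¬ ∃ a b c d : V, a ≠ c ∧ a ≠ d ∧ b ≠ d ∧
    G.Adj a b ∧ G.Adj b c ∧ G.Adj c d ∧ ¬ G.Adj a c ∧ ¬ G.Adj a d ∧ ¬ G.Adj b d

/-- A levelling `(L 0, …, L k)` in `G`. -/
def IsLevelling (G : SimpleGraph V) (k : ℕ) (L : ℕ → Set V) : Prop :=
  (∀ i j, i ≤ k → j ≤ k → i ≠ j → Disjoint (L i) (L j)) ∧
  (∃ x, L 0 = {x}) ∧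
  (∀ i, 1 ≤ i → i ≤ k → ∀ v ∈ L i,
     (∃ u ∈ L (i - 1), G.Adj u v) ∧ (∀ h, h + 1 < i → ∀ u ∈ L h, ¬ G.Adj u v))

/-- The interior (internal vertices) of a walk is contained in `S`. -/
def InteriorIn (G : SimpleGraph V) {u v : V} (p : G.Walk u v) (S : Set V) : Prop :=
  ∀ x ∈ p.support, x ≠ u → x ≠ v → x ∈ S

/-- The union `L 0 ∪ ⋯ ∪ L (k-1)`. -/
def lowerLevels (L : ℕ → Set V) (k : ℕ) : Set V := ⋃ i ∈ Finset.range k, L i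

/-- There is an odd induced path between `u` and `v` with interior in the lower levels. -/
def OddConn (G : SimpleGraph V) (L : ℕ → Set V) (k : ℕ) (u v : V) : Prop :=
  u ≠ v ∧ ∃ p : G.Walk u v, IsInducedPath G p ∧ Odd p.length ∧
    InteriorIn G p (lowerLevels L k)

/-- `w ∈ L (i+1)` is a dependent of `u ∈ L i`: `u` is its only parent. -/
def IsDependent (G : SimpleGraph V) (L : ℕ → Set V) (i : ℕ) (u w : V) : Prop :=
  w ∈ L (i + 1) ∧ G.Adj u w ∧ ∀ x ∈ L i, G.Adj x w → x = u

/-!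
A `P₄` `a - b - c - d` in `L (k-2)` has a common parent `q`, since adjacent vertices of that level
have the same parents. The dependents `a₁` of `a` and `d₁` of `d` have neighbours in the connected
top level, so they are joined by a chordless path `R` with interior in `L k`. No vertex of
`L (k-2)` has a neighbour on `R` except `a` (only `a₁`) and `d` (only `d₁`). Hence if `R` has
even length, `a₁ R d₁ d c b a` is an odd hole, and if it has odd length, `q a a₁ R d₁ d` is one.
-/

namespace SimpleGraph

variable {G : SimpleGraph V}

structure IsInducedP4 (G : SimpleGraph V) (a b c d : V) : Prop where
  ne_ac : a ≠ c
  ne_ad : a ≠ d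
  ne_bd : b ≠ d
  adj_ab : G.Adj a b
  adj_bc : G.Adj b c
  adj_cd : G.Adj c d
  not_adj_ac : ¬ G.Adj a c
  not_adj_ad : ¬ G.Adj a d
  not_adj_bd : ¬ G.Adj b d

theorem exists_isInducedP4_of_not_isCograph_induce {s : Set V}
    (h : ¬ IsCograph (G.induce s)) :
    ∃ a ∈ s, ∃ b ∈ s, ∃ c ∈ s, ∃ d ∈ s, IsInducedP4 G a b c d := by
  obtain ⟨⟨a, ha⟩, ⟨b, hb⟩, ⟨c, hc⟩, ⟨d, hd⟩, hac, had, hbd, hab, hbc, hcd, nac, nad, nbd⟩ :=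
    not_not.mp h
  exact ⟨a, ha, b, hb, c, hc, d, hd, fun h => hac (Subtype.ext h), fun h => had (Subtype.ext h),
    fun h => hbd (Subtype.ext h), hab, hbc, hcd, nac, nad, nbd⟩

namespace Walk

variable {u v w z : V}

theorem isInducedWalk_iff_isChordless (p : G.Walk u v) : IsInducedWalk G p ↔ p.IsChordless := by
  rw [← isInduced_toSubgraph]
  simp [IsInducedWalk, Subgraph.IsInduced]

theorem isChordless_reverse {p : G.Walk u v} : p.reverse.IsChordless ↔ p.IsChordless := by
  simp only [isChordless_iff_forall_mem_edges, support_reverse, edges_reverse, List.mem_reverse]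

theorem IsChordless.cons {p : G.Walk u v} (hp : p.IsChordless) (h : G.Adj z u)
    (hz : ∀ x ∈ p.support, G.Adj z x → x = u) : (cons h p).IsChordless := by
  rw [isChordless_iff_forall_mem_edges] at hp ⊢
  intro x y hx hy hxy
  rw [support_cons, List.mem_cons] at hx hy
  rw [edges_cons, List.mem_cons]
  rcases hx with rfl | hx <;> rcases hy with rfl | hy
  · exact absurd hxy (G.loopless.irrefl _)
  · rw [hz y hy hxy]; exact .inl rfl
  · rw [hz x hx hxy.symm]; exact .inl Sym2.eq_swap
  · exact .inr (hp hx hy hxy)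

theorem IsChordless.concat {p : G.Walk u v} (hp : p.IsChordless) (h : G.Adj v w)
    (hw : ∀ x ∈ p.support, G.Adj x w → x = v) : (p.concat h).IsChordless := by
  rw [← isChordless_reverse, reverse_concat]
  exact (isChordless_reverse.mpr hp).cons h.symm fun x hx hwx => hw x (by simpa using hx) hwx.symm

theorem mem_support_concat {x : V} {p : G.Walk u v} {h : G.Adj v w} :
    x ∈ (p.concat h).support ↔ x ∈ p.support ∨ x = w := by
  simp

theorem exists_shorter_of_adj_getVert {p : G.Walk u v} {i j : ℕ} (hij : i < j)
    (hj : j ≤ p.length) (hadj : G.Adj (p.getVert i) (p.getVert j))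
    (hchord : s(p.getVert i, p.getVert j) ∉ p.edges) :
    ∃ q : G.Walk u v, q.support ⊆ p.support ∧ q.length < p.length := by
  have hij' : i + 1 < j := by
    refine lt_of_le_of_ne hij fun h => hchord ?_
    subst h
    exact (mk_mem_edges_iff_exists p).mpr ⟨i, hj, rfl⟩
  refine ⟨(p.take i).append (cons hadj (p.drop j)), fun x hx => ?_, ?_⟩
  · rw [mem_support_append_iff, support_cons, List.mem_cons] at hx
    rcases hx with hx | rfl | hx
    · rw [support_take] at hx
      exact List.mem_of_mem_take hx
    · exact getVert_mem_support _ _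
    · rw [drop_support_eq_support_drop_min] at hx
      exact List.mem_of_mem_drop hx
  · simp only [length_append, length_cons, take_length, drop_length]
    omega

theorem exists_shorter_of_not_isChordless {p : G.Walk u v} (h : ¬ p.IsChordless) :
    ∃ q : G.Walk u v, q.support ⊆ p.support ∧ q.length < p.length := by
  obtain ⟨x, y, hx, hy, hxy, hchord⟩ : ∃ x y, x ∈ p.support ∧ y ∈ p.support ∧ G.Adj x y ∧
      s(x, y) ∉ p.edges := by
    simpa [isChordless_iff_forall_mem_edges] using h
  obtain ⟨i, rfl, hi⟩ := mem_support_iff_exists_getVert.mp hx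
  obtain ⟨j, rfl, hj⟩ := mem_support_iff_exists_getVert.mp hy
  rcases lt_trichotomy i j with hij | rfl | hij
  · exact exists_shorter_of_adj_getVert hij hj hxy hchord
  · exact absurd hxy (G.loopless.irrefl _)
  · exact exists_shorter_of_adj_getVert hij hi hxy.symm (by rwa [Sym2.eq_swap])

theorem exists_isPath_isChordless_subset (p : G.Walk u v) :
    ∃ q : G.Walk u v, q.IsPath ∧ q.IsChordless ∧ q.support ⊆ p.support := by
  classical
  induction hn : p.length using Nat.strong_induction_on generalizing p with
  | _ n ih =>
  by_cases hc : p.bypass.IsChordless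
  · exact ⟨p.bypass, p.bypass_isPath, hc, p.support_bypass_subset_support⟩
  · obtain ⟨q, hqsub, hqlen⟩ := exists_shorter_of_not_isChordless hc
    obtain ⟨r, hr, hrc, hrsub⟩ := ih q.length (hn ▸ hqlen.trans_le p.length_bypass_le_length) q rfl
    exact ⟨r, hr, hrc,
      List.Subset.trans hrsub (List.Subset.trans hqsub p.support_bypass_subset_support)⟩

theorem hasOddHole_of_isPath_of_isChordless {p : G.Walk u v} (hp : p.IsPath)
    (hc : p.IsChordless) (hzu : G.Adj z u) (hzv : G.Adj z v) (hz : z ∉ p.support)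
    (hN : ∀ x ∈ p.support, G.Adj z x → x = u ∨ x = v) (hlen : 3 ≤ p.length)
    (hodd : Odd p.length) : HasOddHole G := by
  set c := cons hzu (p.concat hzv.symm)
  have hlen_c : c.length = p.length + 2 := by simp [c]
  have hmem : ∀ {x}, x ∈ c.support ↔ x = z ∨ x ∈ p.support := by
    simp only [c, support_cons, support_concat, List.mem_cons, List.mem_append]
    tauto
  have hz_edge : ∀ x ∈ p.support, G.Adj z x → s(z, x) ∈ c.edges := by
    intro x hx hzx
    rcases hN x hx hzx with rfl | rfl <;> simp [c, Sym2.eq_swap]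
  refine ⟨z, c, ?_, ?_, ?_, by omega⟩
  · have huv : u ≠ v := by
      rintro rfl
      rw [(isPath_iff_nil.mp hp).length_eq_zero] at hlen
      omega
    rw [cons_isCycle_iff, concat_isPath_iff, edges_concat]
    refine ⟨⟨hp, hz⟩, fun h => ?_⟩
    simp only [List.concat_eq_append, List.mem_append, List.mem_singleton, Sym2.eq_iff] at h
    rcases h with h | ⟨rfl, -⟩ | ⟨-, rfl⟩
    · exact hz (fst_mem_support_of_mem_edges p h)
    · exact hz p.end_mem_support
    · exact huv rfl
  · rw [isInducedWalk_iff_isChordless, isChordless_iff_forall_mem_edges]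
    intro x y hx hy hxy
    rcases hmem.mp hx with rfl | hxp <;> rcases hmem.mp hy with rfl | hyp
    · exact absurd hxy (G.loopless.irrefl _)
    · exact hz_edge y hyp hxy
    · rw [Sym2.eq_swap]
      exact hz_edge x hxp hxy.symm
    · simp [c, hc.mem_edges hxp hyp hxy]
  · rw [hlen_c]
    exact hodd.add_even even_two

section OddHoleThroughP4

variable {a b c d a₁ d₁ : V} {R : G.Walk a₁ d₁} (hR : R.IsPath) (hRch : R.IsChordless)
  (ha₁ : G.Adj a a₁) (hd₁ : G.Adj d d₁) (ha : a ∉ R.support) (hd : d ∉ R.support)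
  (hNa : ∀ x ∈ R.support, G.Adj a x → x = a₁) (hNd : ∀ x ∈ R.support, G.Adj d x → x = d₁)
include hR hRch ha₁ hd₁ ha hd hNa hNd

theorem hasOddHole_of_even_length (hP : IsInducedP4 G a b c d) (hb : b ∉ R.support)
    (hc : c ∉ R.support) (hNb : ∀ x ∈ R.support, ¬ G.Adj b x)
    (hNc : ∀ x ∈ R.support, ¬ G.Adj c x) (heven : Even R.length) : HasOddHole G := by
  set R₁ := R.concat hd₁.symm
  set R₂ := R₁.concat hP.adj_cd.symm
  set R₃ := R₂.concat hP.adj_bc.symm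
  have hR₁ : R₁.IsPath ∧ R₁.IsChordless :=
    ⟨hR.concat hd _, hRch.concat _ fun x hx hxd => hNd x hx hxd.symm⟩
  have hR₂ : R₂.IsPath ∧ R₂.IsChordless := by
    refine ⟨hR₁.1.concat ?_ _, hR₁.2.concat _ fun x hx hxc => ?_⟩
    · simpa [R₁] using ⟨hc, hP.adj_cd.ne⟩
    · simp only [R₁, mem_support_concat] at hx
      exact hx.resolve_left fun hx => hNc x hx hxc.symm
  have hR₃ : R₃.IsPath ∧ R₃.IsChordless := by
    refine ⟨hR₂.1.concat ?_ _, hR₂.2.concat _ fun x hx hxb => ?_⟩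
    · simpa [R₂, R₁] using ⟨hb, hP.ne_bd, hP.adj_bc.ne⟩
    · simp only [R₂, R₁, mem_support_concat] at hx
      rcases hx with (hx | rfl) | rfl
      · exact absurd hxb.symm (hNb x hx)
      · exact absurd hxb.symm hP.not_adj_bd
      · rfl
  refine hasOddHole_of_isPath_of_isChordless hR₃.1 hR₃.2 ha₁ hP.adj_ab ?_ ?_ ?_ ?_
  · simpa [R₃, R₂, R₁] using ⟨ha, hP.ne_ad, hP.ne_ac, hP.adj_ab.ne⟩
  · intro x hx hax
    simp only [R₃, R₂, R₁, mem_support_concat] at hx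
    rcases hx with ((hx | rfl) | rfl) | rfl
    · exact .inl (hNa x hx hax)
    · exact absurd hax hP.not_adj_ad
    · exact absurd hax hP.not_adj_ac
    · exact .inr rfl
  · simp [R₃, R₂, R₁]
  · simpa [R₃, R₂, R₁] using heven.add_odd (by decide : Odd 3)

theorem hasOddHole_of_odd_length {q : V} (hne : a ≠ d) (had : ¬ G.Adj a d) (hqa : G.Adj q a)
    (hqd : G.Adj q d) (hq : q ∉ R.support) (hNq : ∀ x ∈ R.support, ¬ G.Adj q x)
    (hodd : Odd R.length) : HasOddHole G := by
  set P := cons ha₁ (R.concat hd₁.symm)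
  have hPind : P.IsPath ∧ P.IsChordless := by
    refine ⟨(hR.concat hd _).cons ?_, (hRch.concat _ fun x hx hxd => hNd x hx hxd.symm).cons _ ?_⟩
    · simpa using ⟨ha, hne⟩
    · intro x hx hax
      rw [mem_support_concat] at hx
      exact hx.elim (hNa x · hax) fun hxd => absurd (hxd ▸ hax) had
  refine hasOddHole_of_isPath_of_isChordless hPind.1 hPind.2 hqa hqd ?_ ?_ ?_ ?_
  · simpa [P] using ⟨hqa.ne, hq, hqd.ne⟩
  · intro x hx hqx
    simp only [P, support_cons, List.mem_cons, mem_support_concat] at hx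
    rcases hx with rfl | hx | rfl
    · exact .inl rfl
    · exact absurd hqx (hNq x hx)
    · exact .inr rfl
  · have := hodd.pos
    simp only [P, length_cons, length_concat]
    omega
  · simpa [P, add_assoc] using hodd.add_even even_two

end OddHoleThroughP4

end Walk

theorem exists_isPath_isChordless_of_connected_induce {s : Set V} (hs : (G.induce s).Connected)
    {u v u' v' : V} (hu' : u' ∈ s) (hv' : v' ∈ s) (hu : G.Adj u u') (hv : G.Adj v v') :
    ∃ p : G.Walk u v, p.IsPath ∧ p.IsChordless ∧ ∀ x ∈ p.support, x = u ∨ x = v ∨ x ∈ s := by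
  obtain ⟨w⟩ := hs.preconnected ⟨u', hu'⟩ ⟨v', hv'⟩
  let w' : G.Walk u' v' := w.map (Embedding.induce s).toHom
  have hw' : ∀ x ∈ w'.support, x ∈ s := by
    intro x hx
    rw [show w'.support = w.support.map Subtype.val from Walk.support_map _ _] at hx
    obtain ⟨t, -, rfl⟩ := List.mem_map.mp hx
    exact t.2
  obtain ⟨p, hp, hpc, hsub⟩ := (Walk.cons hu (w'.concat hv.symm)).exists_isPath_isChordless_subset
  refine ⟨p, hp, hpc, fun x hx => ?_⟩
  have hx : x ∈ _ := hsub hx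
  simp only [Walk.support_cons, List.mem_cons, Walk.mem_support_concat] at hx
  rcases hx with rfl | hx | rfl
  · exact .inl rfl
  · exact .inr (.inr (hw' x hx))
  · exact .inr (.inl rfl)

end SimpleGraph

namespace IsLevelling

variable {G : SimpleGraph V} {k : ℕ} {L : ℕ → Set V} {i j : ℕ} {x y : V}

theorem notMem_of_mem_of_ne (hlev : IsLevelling G k L) (hi : i ≤ k) (hj : j ≤ k) (hij : i ≠ j)
    (hx : x ∈ L i) : x ∉ L j :=
  Set.disjoint_left.mp (hlev.1 i j hi hj hij) hx

theorem not_adj_of_add_one_lt (hlev : IsLevelling G k L) (hi : i ≤ k) (hji : j + 1 < i)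
    (hx : x ∈ L i) (hy : y ∈ L j) : ¬ G.Adj y x :=
  (hlev.2.2 i (by omega) hi x hx).2 j hji y hy

theorem exists_adj_of_mem (hlev : IsLevelling G k L) (hi : i + 1 ≤ k) (hx : x ∈ L (i + 1)) :
    ∃ y ∈ L i, G.Adj y x :=
  (hlev.2.2 (i + 1) (by omega) hi x hx).1

theorem hasOddHole_of_isInducedP4 (hlev : IsLevelling G k L) {m : ℕ} (hm : m + 3 ≤ k)
    (hconn : (G.induce (L (m + 3))).Connected)
    (hup : ∀ u ∈ L (m + 2), ∃ w ∈ L (m + 3), G.Adj u w) {q a b c d a₁ d₁ : V} (hq : q ∈ L m)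
    (ha : a ∈ L (m + 1)) (hb : b ∈ L (m + 1)) (hc : c ∈ L (m + 1)) (hd : d ∈ L (m + 1))
    (hP : IsInducedP4 G a b c d) (hqa : G.Adj q a) (hqd : G.Adj q d)
    (ha₁ : IsDependent G L (m + 1) a a₁) (hd₁ : IsDependent G L (m + 1) d d₁) :
    HasOddHole G := by
  obtain ⟨a₂, ha₂, ha₁a₂⟩ := hup a₁ ha₁.1
  obtain ⟨d₂, hd₂, hd₁d₂⟩ := hup d₁ hd₁.1
  obtain ⟨R, hR, hRch, hRs⟩ :=
    exists_isPath_isChordless_of_connected_induce hconn ha₂ hd₂ ha₁a₂ hd₁d₂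
  have hR_top : ∀ x ∈ R.support, x ∈ L (m + 2) ∨ x ∈ L (m + 3) := by
    intro x hx
    rcases hRs x hx with rfl | rfl | hx
    exacts [.inl ha₁.1, .inl hd₁.1, .inr hx]
  have hR_notMem : ∀ i ≤ m + 1, ∀ y ∈ L i, y ∉ R.support := by
    intro i hi y hy hyR
    rcases hR_top y hyR with hy' | hy' <;>
      exact hlev.notMem_of_mem_of_ne (by omega) (by omega) (by omega) hy hy'
  have hR_adj : ∀ y ∈ L (m + 1), ∀ x ∈ R.support, G.Adj y x →
      (y = a ∧ x = a₁) ∨ (y = d ∧ x = d₁) := by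
    intro y hy x hx hyx
    rcases hRs x hx with rfl | rfl | hx
    · exact .inl ⟨ha₁.2.2 y hy hyx, rfl⟩
    · exact .inr ⟨hd₁.2.2 y hy hyx, rfl⟩
    · exact absurd hyx (hlev.not_adj_of_add_one_lt hm (by omega) hx hy)
  have hNa : ∀ x ∈ R.support, G.Adj a x → x = a₁ := fun x hx hax =>
    (hR_adj a ha x hx hax).elim And.right fun h => absurd h.1 hP.ne_ad
  have hNd : ∀ x ∈ R.support, G.Adj d x → x = d₁ := fun x hx hdx =>
    (hR_adj d hd x hx hdx).elim (fun h => absurd h.1.symm hP.ne_ad) And.right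
  rcases Nat.even_or_odd R.length with heven | hodd
  · refine Walk.hasOddHole_of_even_length hR hRch ha₁.2.1 hd₁.2.1 (hR_notMem _ le_rfl a ha)
      (hR_notMem _ le_rfl d hd) hNa hNd hP (hR_notMem _ le_rfl b hb) (hR_notMem _ le_rfl c hc)
      (fun x hx hbx => ?_) (fun x hx hcx => ?_) heven
    · rcases hR_adj b hb x hx hbx with ⟨rfl, -⟩ | ⟨rfl, -⟩
      exacts [hP.adj_ab.ne rfl, hP.ne_bd rfl]
    · rcases hR_adj c hc x hx hcx with ⟨rfl, -⟩ | ⟨rfl, -⟩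
      exacts [hP.ne_ac rfl, hP.adj_cd.ne rfl]
  · refine Walk.hasOddHole_of_odd_length hR hRch ha₁.2.1 hd₁.2.1 (hR_notMem _ le_rfl a ha)
      (hR_notMem _ le_rfl d hd) hNa hNd hP.ne_ad hP.not_adj_ad hqa hqd
      (hR_notMem _ (by omega) q hq) (fun x hx hqx => ?_) hodd
    rcases hR_top x hx with hx' | hx'
    exacts [hlev.not_adj_of_add_one_lt (by omega) (by omega) hx' hq hqx,
      hlev.not_adj_of_add_one_lt hm (by omega) hx' hq hqx]

end IsLevelling

theorem stmt17_general (G : SimpleGraph V) (k : ℕ) (hk : 3 ≤ k) (L : ℕ → Set V)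
    (hnoodd : ¬ HasOddHole G) (hlev : IsLevelling G k L)
    (hconn : (G.induce (L k)).Connected)
    (hdep1 : ∀ u ∈ L (k - 1), ∃ w, IsDependent G L (k - 1) u w)
    (hdep2 : ∀ u ∈ L (k - 2), ∃ w, IsDependent G L (k - 2) u w)
    (hparent : ∀ i, 1 ≤ i → i ≤ k - 2 → ∀ u ∈ L i, ∀ v ∈ L i, G.Adj u v →
       ∀ w ∈ L (i - 1), (G.Adj w u ↔ G.Adj w v)) :
    IsCograph (G.induce (L (k - 2))) := by
  obtain ⟨m, rfl⟩ : ∃ m, k = m + 3 := ⟨k - 3, by omega⟩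
  by_contra hcog
  obtain ⟨a, ha, b, hb, c, hc, d, hd, hP⟩ := exists_isInducedP4_of_not_isCograph_induce hcog
  obtain ⟨q, hq, hqa⟩ := hlev.exists_adj_of_mem (by omega) ha
  have hpar := hparent (m + 1) (by omega) le_rfl
  have hqd : G.Adj q d := (hpar c hc d hd hP.adj_cd q hq).mp <|
    (hpar b hb c hc hP.adj_bc q hq).mp <| (hpar a ha b hb hP.adj_ab q hq).mp hqa
  obtain ⟨a₁, ha₁⟩ := hdep2 a ha
  obtain ⟨d₁, hd₁⟩ := hdep2 d hd
  exact hnoodd <| hlev.hasOddHole_of_isInducedP4 le_rfl hconn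
    (fun u hu => (hdep1 u hu).imp fun _ hw => ⟨hw.1, hw.2.1⟩) hq ha hb hc hd hP hqa hqd ha₁ hd₁

theorem stmt17 [Fintype V] (G : SimpleGraph V) (k : ℕ) (hk : 3 ≤ k) (L : ℕ → Set V)
    (hnoodd : ¬ HasOddHole G) (hlev : IsLevelling G k L)
    (hconn : (G.induce (L k)).Connected)
    (hdep1 : ∀ u ∈ L (k - 1), ∃ w, IsDependent G L (k - 1) u w)
    (hdep2 : ∀ u ∈ L (k - 2), ∃ w, IsDependent G L (k - 2) u w)
    (hparent : ∀ i, 1 ≤ i → i ≤ k - 2 → ∀ u ∈ L i, ∀ v ∈ L i, G.Adj u v →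
       ∀ w ∈ L (i - 1), (G.Adj w u ↔ G.Adj w v)) :
    IsCograph (G.induce (L (k - 2))) :=
  stmt17_general G k hk L hnoodd hlev hconn hdep1 hdep2 hparent
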